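/- arXiv:2304.03260 — 9 statements merged into one kernel-verified Lean document; each statement's English description precedes it below -/
import Mathlib

section
/- Let R be a commutative noetherian ring and let 𝒞 be a subcategory of the category of finitely generated R-modules that is closed under images and extensions (i.e., an IE-closed subcategory). Then 𝒞 is closed under submodules; in particular, 𝒞 is a torsion-free class. -/
/-!
STATEMENT 0: Let `R` be a commutative noetherian ring and let `𝒞` be a subcategory of the
category of finitely generated `R`-modules that is closed under images and extensions
(i.e., an IE-closed subcategory). Then `𝒞` is closed under submodules; in particular,
`𝒞` is a torsion-free class.
-/

universe u

section Defs

variable (A : Type u) [Ring A]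

/-- `C` is a subcategory of `mod A`: it is closed under isomorphisms, contains the zero
modules, and consists of finitely generated modules. -/
def IsModSubcat (C : Set (ModuleCat.{u} A)) : Prop :=
  (∀ M N : ModuleCat.{u} A, (M ≃ₗ[A] N) → M ∈ C → N ∈ C) ∧
  (∀ M : ModuleCat.{u} A, Subsingleton M → M ∈ C) ∧
  (∀ M ∈ C, Module.Finite A M)

/-- `C` is closed under submodules. -/
def SubmoduleClosed (C : Set (ModuleCat.{u} A)) : Prop :=
  ∀ M ∈ C, ∀ N : Submodule A M, ModuleCat.of A N ∈ C

/-- `C` is closed under images: for every `A`-linear map `f : C₁ → C₂` with `C₁, C₂ ∈ C`,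
the image of `f` belongs to `C`. -/
def ImagesClosed (C : Set (ModuleCat.{u} A)) : Prop :=
  ∀ M₁ ∈ C, ∀ M₂ ∈ C, ∀ f : M₁ →ₗ[A] M₂, ModuleCat.of A (LinearMap.range f) ∈ C

/-- `C` is closed under extensions: for every short exact sequence
`0 → L → M → N → 0` of finitely generated modules with `L, N ∈ C`, we have `M ∈ C`. -/
def ExtClosed (C : Set (ModuleCat.{u} A)) : Prop :=
  ∀ (L M N : ModuleCat.{u} A), Module.Finite A M →
    ∀ (f : L →ₗ[A] M) (g : M →ₗ[A] N),
      Function.Injective f → Function.Surjective g →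
      LinearMap.range f = LinearMap.ker g →
      L ∈ C → N ∈ C → M ∈ C

end Defs

/-!
Let `N ≤ M` with `M ∈ 𝒞`, and let `L` be a maximal submodule of `N` lying in `𝒞` (it exists since
`M` is noetherian and `0 ∈ 𝒞`). If `L ≠ N`, an associated prime `p` of `N ⧸ L` gives an embedding
`R ⧸ p ↪ N ⧸ L`, and `p` lies in the support of `M`; by Nakayama `M ⧸ pM` is then a faithful
module over the domain `R ⧸ p`, hence has a nonzero functional, and we get a nonzero
`φ : M → N ⧸ L`. The pullback of `φ` along `N ↠ N ⧸ L` is an extension of `M` by `L`, hence in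
`𝒞`, and its image in `M` is the preimage of `range φ` in `N`: a member of `𝒞` strictly above `L`.
-/

open LinearMap Submodule

theorem Module.exists_dual_ne_zero_of_faithfulSMul {D T : Type*} [CommRing D] [IsDomain D]
    [AddCommGroup T] [Module D T] [Module.Finite D T] [FaithfulSMul D T] :
    ∃ f : Module.Dual D T, f ≠ 0 := by
  classical
  obtain ⟨G, hG⟩ := Module.Finite.fg_top (R := D) (M := T)
  obtain ⟨s, hs, hmax⟩ := exists_maximal_linearIndepOn D ((↑) : G → T)
  set F := span D (Set.range fun i : s ↦ (i : T))
  have hscale (g : G) : ∃ a : D, a ≠ 0 ∧ a • (g : T) ∈ F := by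
    by_cases hg : g ∈ s
    · exact ⟨1, one_ne_zero, by rw [one_smul]; exact subset_span ⟨⟨g, hg⟩, rfl⟩⟩
    · simpa [F, Set.image_eq_range] using hmax g hg
  choose a ha₀ haF using hscale
  -- `F` is free and some `A ≠ 0` scales `T` into it; faithfulness keeps some `A • t ≠ 0`
  set A := ∏ g, a g
  have hAF (t : T) : A • t ∈ F := by
    have : (⊤ : Submodule D T) ≤ F.comap (lsmul D T A) := by
      rw [← hG, span_le]
      intro g hg
      obtain ⟨c, hc⟩ := Finset.dvd_prod_of_mem a (Finset.mem_univ ⟨g, hg⟩)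
      simpa [A, hc, mul_comm, mul_smul] using F.smul_mem c (haF ⟨g, hg⟩)
    exact this trivial
  obtain ⟨t, ht⟩ : ∃ t : T, A • t ≠ 0 := by
    by_contra! h
    exact Finset.prod_ne_zero_iff.mpr (fun g _ ↦ ha₀ g)
      (eq_of_smul_eq_smul (m₂ := (0 : D)) fun t ↦ by rw [h t, zero_smul])
  let b := Module.Basis.span hs
  let scale : T →ₗ[D] F := (lsmul D T A).codRestrict F hAF
  obtain ⟨i, hi⟩ : ∃ i, b.repr (scale t) i ≠ 0 := by
    by_contra! h
    exact ht (congrArg Subtype.val (b.repr.map_eq_zero_iff.mp (Finsupp.ext h)))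
  exact ⟨b.coord i ∘ₗ scale, fun h ↦ hi (LinearMap.congr_fun h t)⟩

theorem Module.exists_linearMap_quotient_ne_zero_of_mem_support {R V : Type*} [CommRing R]
    [AddCommGroup V] [Module R V] [Module.Finite R V] {p : PrimeSpectrum R}
    (hp : p ∈ Module.support R V) : ∃ f : V →ₗ[R] R ⧸ p.asIdeal, f ≠ 0 := by
  set T := V ⧸ (p.asIdeal • ⊤ : Submodule R V)
  have hT : Module.annihilator R T ≤ p.asIdeal := by
    refine Module.annihilator_le_of_mem_support ?_
    rw [Module.support_quotient]
    exact ⟨hp, (PrimeSpectrum.mem_zeroLocus _ _).mpr subset_rfl⟩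
  have : FaithfulSMul (R ⧸ p.asIdeal) T := by
    rw [← Module.annihilator_eq_bot, eq_bot_iff]
    intro d hd
    obtain ⟨r, rfl⟩ := Ideal.Quotient.mk_surjective d
    rw [mem_bot, Ideal.Quotient.eq_zero_iff_mem]
    refine hT (Module.mem_annihilator.mpr fun t ↦ ?_)
    rw [← algebraMap_smul (R ⧸ p.asIdeal) r t]
    exact Module.mem_annihilator.mp hd t
  obtain ⟨g, hg⟩ := Module.exists_dual_ne_zero_of_faithfulSMul (D := R ⧸ p.asIdeal) (T := T)
  refine ⟨g.restrictScalars R ∘ₗ mkQ _, fun h ↦ hg (restrictScalars_injective R ?_)⟩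
  exact (cancel_right (mkQ_surjective _)).mp (h.trans (zero_comp _).symm)

theorem Module.exists_linearMap_ne_zero_of_support_subset {R M Q : Type*} [CommRing R]
    [IsNoetherianRing R] [AddCommGroup M] [Module R M] [Module.Finite R M] [AddCommGroup Q]
    [Module R Q] [Nontrivial Q] (h : Module.support R Q ⊆ Module.support R M) :
    ∃ f : M →ₗ[R] Q, f ≠ 0 := by
  obtain ⟨q, hass⟩ := associatedPrimes.nonempty R Q
  obtain ⟨hq, ι, hι⟩ := (isAssociatedPrime_iff_exists_injective_linearMap q Q).mp hass
  have hp : (⟨q, hq⟩ : PrimeSpectrum R) ∈ Module.support R (R ⧸ q) :=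
    Module.mem_support_iff_of_finite.mpr Ideal.annihilator_quotient.le
  obtain ⟨f, hf⟩ := Module.exists_linearMap_quotient_ne_zero_of_mem_support
    (h (Module.support_subset_of_injective ι hι hp))
  exact ⟨ι ∘ₗ f, fun h₀ ↦ hf ((cancel_left hι).mp (h₀.trans (comp_zero ι).symm))⟩

theorem Submodule.lt_comap_mkQ_range {R M W : Type*} [Ring R] [AddCommGroup M] [Module R M]
    [AddCommGroup W] [Module R W] {p : Submodule R M} {φ : W →ₗ[R] M ⧸ p} (hφ : φ ≠ 0) :
    p < (range φ).comap p.mkQ := by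
  simpa using (comapMkQOrderEmbedding p).strictMono
    (bot_lt_iff_ne_bot.mpr (range_eq_bot.not.mpr hφ))

section Pullback

variable {R W Y Q : Type*} [Ring R] [AddCommGroup W] [Module R W] [AddCommGroup Y] [Module R Y]
  [AddCommGroup Q] [Module R Q]

def LinearMap.pullback (φ : W →ₗ[R] Q) (π : Y →ₗ[R] Q) : Submodule R (W × Y) :=
  ker (φ.coprod (-π))

@[simp]
theorem LinearMap.mem_pullback {φ : W →ₗ[R] Q} {π : Y →ₗ[R] Q} {z : W × Y} :
    z ∈ φ.pullback π ↔ φ z.1 = π z.2 := by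
  simp [pullback, ← sub_eq_add_neg, sub_eq_zero]

theorem LinearMap.map_snd_pullback (φ : W →ₗ[R] Q) (π : Y →ₗ[R] Q) :
    (φ.pullback π).map (snd R W Y) = (range φ).comap π := by
  ext y
  simp

end Pullback

section IEClosed

variable {R : Type u} [Ring R] {C : Set (ModuleCat.{u} R)}

namespace IsModSubcat

variable (hC : IsModSubcat R C)
include hC

theorem mem_of_linearEquiv {M N : Type u} [AddCommGroup M] [Module R M] [AddCommGroup N]
    [Module R N] (e : M ≃ₗ[R] N) (hM : ModuleCat.of R M ∈ C) : ModuleCat.of R N ∈ C :=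
  hC.1 _ _ e hM

theorem mem_of_subsingleton (M : Type u) [AddCommGroup M] [Module R M] [Subsingleton M] :
    ModuleCat.of R M ∈ C :=
  hC.2.1 _ ‹_›

theorem finite_of_mem {M : Type u} [AddCommGroup M] [Module R M] (hM : ModuleCat.of R M ∈ C) :
    Module.Finite R M :=
  hC.2.2 _ hM

end IsModSubcat

variable [IsNoetherianRing R] {W X Y Q : Type u} [AddCommGroup W] [Module R W] [AddCommGroup X]
  [Module R X] [AddCommGroup Y] [Module R Y] [AddCommGroup Q] [Module R Q]

theorem ExtClosed.pullback_mem (hext : ExtClosed R C) (hC : IsModSubcat R C) [Module.Finite R Y]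
    (φ : W →ₗ[R] Q) {π : Y →ₗ[R] Q} (hπ : Function.Surjective π) (hW : ModuleCat.of R W ∈ C)
    (hK : ModuleCat.of R (ker π) ∈ C) : ModuleCat.of R (φ.pullback π) ∈ C := by
  set P := φ.pullback π
  let f : ker π →ₗ[R] P :=
    (inr R W Y ∘ₗ (ker π).subtype).codRestrict P fun k ↦ by simp [P]
  let g : P →ₗ[R] W := fst R W Y ∘ₗ P.subtype
  have hf : Function.Injective f := fun k k' h ↦ Subtype.ext (congrArg (Prod.snd ∘ Subtype.val) h)
  have hg : Function.Surjective g := fun w ↦ by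
    obtain ⟨y, hy⟩ := hπ (φ w)
    exact ⟨⟨(w, y), mem_pullback.mpr hy.symm⟩, rfl⟩
  have hfg : range f = ker g := by
    ext ⟨⟨w, y⟩, hwy⟩
    constructor
    · rintro ⟨k, hk⟩
      exact (congrArg (Prod.fst ∘ Subtype.val) hk).symm
    · intro (hw : w = 0)
      subst hw
      exact ⟨⟨y, by simpa [eq_comm] using mem_pullback.mp hwy⟩, rfl⟩
  have := hC.finite_of_mem hW
  exact hext (.of R (ker π)) (.of R P) (.of R W) inferInstance f g hf hg hfg hK hW

theorem ImagesClosed.comap_range_mem (him : ImagesClosed R C) (hext : ExtClosed R C)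
    (hC : IsModSubcat R C) {θ : Y →ₗ[R] X} (hθ : Function.Injective θ)
    (hX : ModuleCat.of R X ∈ C) (φ : W →ₗ[R] Q) {π : Y →ₗ[R] Q} (hπ : Function.Surjective π)
    (hW : ModuleCat.of R W ∈ C) (hK : ModuleCat.of R (ker π) ∈ C) :
    ModuleCat.of R ((range φ).comap π) ∈ C := by
  have := hC.finite_of_mem hX
  have := Module.Finite.of_injective θ hθ
  have himage := him (.of R (φ.pullback π)) (hext.pullback_mem hC φ hπ hW hK) (.of R X) hX
    (θ ∘ₗ snd R W Y ∘ₗ (φ.pullback π).subtype)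
  rw [range_comp, range_comp, range_subtype, map_snd_pullback] at himage
  exact hC.mem_of_linearEquiv (equivMapOfInjective θ hθ _).symm himage

end IEClosed

theorem ie_closed_is_torsionFree (R : Type u) [CommRing R] [IsNoetherianRing R]
    (C : Set (ModuleCat.{u} R)) (hC : IsModSubcat R C)
    (him : ImagesClosed R C) (hext : ExtClosed R C) :
    SubmoduleClosed R C ∧ ExtClosed R C := by
  refine ⟨fun M hM N ↦ ?_, hext⟩
  have := hC.finite_of_mem hM
  obtain ⟨L, hLC, hLmax⟩ := set_has_maximal_iff_noetherian.mpr inferInstance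
    {L : Submodule R N | ModuleCat.of R L ∈ C} ⟨⊥, hC.mem_of_subsingleton _⟩
  have hL : L = ⊤ := by
    by_contra hL
    have := Quotient.nontrivial_iff.mpr hL
    obtain ⟨φ, hφ⟩ := Module.exists_linearMap_ne_zero_of_support_subset (M := M) (Q := N ⧸ L)
      ((Module.support_subset_of_surjective _ L.mkQ_surjective).trans
        (Module.support_subset_of_injective _ N.injective_subtype))
    have hLC' : ModuleCat.of R (ker L.mkQ) ∈ C := by rwa [ker_mkQ]
    exact hLmax _ (him.comap_range_mem hext hC N.injective_subtype hM φ L.mkQ_surjective hM hLC')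
      (lt_comap_mkQ_range hφ)
  rw [hL] at hLC
  exact hC.mem_of_linearEquiv topEquiv hLC
end

section
/- Let R be a commutative noetherian ring and let 𝒞 be a subcategory of the category of finitely generated R-modules. The following are equivalent: (1) 𝒞 is closed under submodules and extensions (i.e., 𝒞 is a torsion-free class); (2) 𝒞 is closed under images, kernels, and extensions (i.e., 𝒞 is IKE-closed); (3) 𝒞 is closed under images and extensions (i.e., 𝒞 is IE-closed). -/
universe u

section Defs

variable (A : Type u) [Ring A]

/-- `C` is closed under quotient modules. -/
def QuotClosed (C : Set (ModuleCat.{u} A)) : Prop :=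
  ∀ M ∈ C, ∀ N : Submodule A M, ModuleCat.of A (M ⧸ N) ∈ C

/-- `C` is closed under kernels: for every `A`-linear map `f : C₁ → C₂` with `C₁, C₂ ∈ C`,
the kernel of `f` belongs to `C`. -/
def KernelsClosed (C : Set (ModuleCat.{u} A)) : Prop :=
  ∀ M₁ ∈ C, ∀ M₂ ∈ C, ∀ f : M₁ →ₗ[A] M₂, ModuleCat.of A (LinearMap.ker f) ∈ C

end Defs

set_option linter.unusedSectionVars false

open Submodule LinearMap

section HardDir

variable {R : Type u} [CommRing R] [IsNoetherianRing R]
variable {C : Set (ModuleCat.{u} R)}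

private abbrev CC (C : Set (ModuleCat.{u} R)) (X : Type u) [AddCommGroup X] [Module R X] : Prop :=
  ModuleCat.of R X ∈ C

private lemma mem_of_equiv (hC : IsModSubcat R C)
    {X Y : Type u} [AddCommGroup X] [Module R X] [AddCommGroup Y] [Module R Y]
    (e : X ≃ₗ[R] Y) (hX : CC C X) : CC C Y :=
  hC.1 (ModuleCat.of R X) (ModuleCat.of R Y) e hX

private lemma fin_of_mem (hC : IsModSubcat R C) {X : Type u} [AddCommGroup X] [Module R X]
    (hX : CC C X) : Module.Finite R X :=
  hC.2.2 (ModuleCat.of R X) hX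

/-- `C` is closed under binary products. -/
private lemma cProdMem (hC : IsModSubcat R C) (hext : ExtClosed R C)
    {X Y : Type u} [AddCommGroup X] [Module R X] [AddCommGroup Y] [Module R Y]
    (hX : CC C X) (hY : CC C Y) : CC C (X × Y) := by
  haveI : Module.Finite R X := fin_of_mem hC hX
  haveI : Module.Finite R Y := fin_of_mem hC hY
  exact hext (ModuleCat.of R X) (ModuleCat.of R (X × Y)) (ModuleCat.of R Y) (inferInstanceAs (Module.Finite R (X × Y)))
    (LinearMap.inl R X Y) (LinearMap.snd R X Y) LinearMap.inl_injective
    LinearMap.snd_surjective (LinearMap.range_inl R X Y) hX hY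

/-- `C` is closed under sums of two submodules that lie in `C`. -/
private lemma cSupMem (hC : IsModSubcat R C) (himg : ImagesClosed R C) (hext : ExtClosed R C)
    {M : Type u} [AddCommGroup M] [Module R M] (hM : CC C M)
    {X Y : Submodule R M} (hX : CC C X) (hY : CC C Y) : CC C ↥(X ⊔ Y) := by
  have h := himg (ModuleCat.of R (↥X × ↥Y)) (cProdMem hC hext hX hY) (ModuleCat.of R M) hM
    (X.subtype.coprod Y.subtype)
  rwa [LinearMap.range_coprod, Submodule.range_subtype, Submodule.range_subtype] at h

/-- For `a : R`, `span {a} • ⊤` is the range of scalar multiplication by `a`. -/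
private lemma span_singleton_smul_top_eq_range {M : Type u} [AddCommGroup M] [Module R M]
    (a : R) :
    (Ideal.span {a} : Ideal R) • (⊤ : Submodule R M)
      = LinearMap.range (a • (LinearMap.id : M →ₗ[R] M)) := by
  apply le_antisymm
  · refine Submodule.smul_le.mpr ?_
    intro r hr n _
    obtain ⟨c, rfl⟩ := Ideal.mem_span_singleton'.mp hr
    exact ⟨c • n, by rw [LinearMap.smul_apply, LinearMap.id_coe, id_eq, smul_smul, mul_comm a c]⟩
  · rintro x ⟨v, rfl⟩
    exact Submodule.smul_mem_smul (Ideal.mem_span_singleton_self a) trivial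

/-- `C` is closed under `M ↦ I • M`. -/
private lemma cSmulTopMem (hC : IsModSubcat R C) (himg : ImagesClosed R C) (hext : ExtClosed R C)
    {M : Type u} [AddCommGroup M] [Module R M] (hM : CC C M) (I : Ideal R) :
    CC C ↥(I • (⊤ : Submodule R M)) := by
  classical
  obtain ⟨s, hs⟩ : I.FG := IsNoetherian.noetherian I
  rw [← hs]
  clear hs
  induction s using Finset.induction_on with
  | empty =>
      have : ((Ideal.span (↑(∅ : Finset R)) : Ideal R) • (⊤ : Submodule R M)) = ⊥ := by
        simp
      rw [this]
      exact hC.2.1 (ModuleCat.of R ↥(⊥ : Submodule R M)) inferInstance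
  | @insert a s ha ih =>
      have h1 : (Ideal.span (↑(insert a s) : Set R) : Ideal R) • (⊤ : Submodule R M)
          = (Ideal.span {a} : Ideal R) • (⊤ : Submodule R M)
            ⊔ (Ideal.span (↑s : Set R) : Ideal R) • (⊤ : Submodule R M) := by
        rw [Finset.coe_insert, Ideal.span_insert, Submodule.sup_smul]
      rw [h1]
      refine cSupMem hC himg hext hM ?_ ih
      rw [span_singleton_smul_top_eq_range]
      exact himg (ModuleCat.of R M) hM (ModuleCat.of R M) hM (a • LinearMap.id)

end HardDir

section Core
variable {R : Type u} [CommRing R] [IsNoetherianRing R]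
variable {C : Set (ModuleCat.{u} R)}

/-- Key step: if `N ⊔ R·u = M` with `M ∈ C`, then `N ∈ C`. -/
private lemma cyclicStep (hC : IsModSubcat R C) (himg : ImagesClosed R C) (hext : ExtClosed R C)
    {M : Type u} [AddCommGroup M] [Module R M] (hM : CC C M)
    (N : Submodule R M) (u : M) (hu : N ⊔ Submodule.span R {u} = ⊤) :
    CC C ↥N := by
  classical
  haveI : Module.Finite R M := fin_of_mem hC hM
  set I : Ideal R := N.comap (LinearMap.toSpanSingleton R M u) with hIdef
  set K : Submodule R M := I • (⊤ : Submodule R M) with hKdef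
  have hmemI : ∀ r : R, r ∈ I ↔ r • u ∈ N := by
    intro r
    rw [hIdef, Submodule.mem_comap, LinearMap.toSpanSingleton_apply]
  have hKN : K ≤ N := by
    rw [hKdef]
    refine Submodule.smul_le.mpr ?_
    intro r hr n _
    have hru : r • u ∈ N := (hmemI r).mp hr
    have hn : n ∈ N ⊔ Submodule.span R {u} := by rw [hu]; trivial
    obtain ⟨y, hy, z, hz, rfl⟩ := Submodule.mem_sup.mp hn
    obtain ⟨s, rfl⟩ := Submodule.mem_span_singleton.mp hz
    have hcomm : r • (s • u) = s • (r • u) := by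
      rw [smul_smul, smul_smul, mul_comm]
    rw [smul_add, hcomm]
    exact N.add_mem (N.smul_mem r hy) (N.smul_mem s hru)
  have hK : CC C ↥K := cSmulTopMem hC himg hext hM I
  set K' : Submodule R ↥N := K.comap N.subtype with hK'def
  set c : (↥N × R) →ₗ[R] M := (N.subtype).coprod (LinearMap.toSpanSingleton R M u) with hcdef
  have hc : Function.Surjective c := by
    rw [← LinearMap.range_eq_top, hcdef, LinearMap.range_coprod, Submodule.range_subtype,
      ← LinearMap.span_singleton_eq_range, hu]
  set ψ : (↥N × R) →ₗ[R] (↥N ⧸ K') := (K'.mkQ).comp (LinearMap.fst R ↥N R) with hψdef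
  have hker : LinearMap.ker c ≤ LinearMap.ker ψ := by
    rintro ⟨n, r⟩ hp
    rw [LinearMap.mem_ker, hcdef, LinearMap.coprod_apply, Submodule.coe_subtype,
      LinearMap.toSpanSingleton_apply] at hp
    have hnval : (n : M) = (-r) • u := by
      rw [neg_smul]
      exact eq_neg_of_add_eq_zero_left hp
    have hrI : -r ∈ I := by
      rw [hmemI, ← hnval]
      exact n.2
    rw [LinearMap.mem_ker, hψdef, LinearMap.comp_apply, LinearMap.fst_apply,
      Submodule.mkQ_apply, Submodule.Quotient.mk_eq_zero, hK'def, Submodule.mem_comap,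
      Submodule.coe_subtype, hnval, hKdef]
    exact Submodule.smul_mem_smul hrI trivial
  set e := c.quotKerEquivOfSurjective hc with hedef
  set β : M →ₗ[R] (↥N ⧸ K') := ((LinearMap.ker c).liftQ ψ hker).comp (e.symm.toLinearMap)
    with hβdef
  have hβ : Function.Surjective β := by
    have h1 : Function.Surjective ψ := by
      intro q
      obtain ⟨n, rfl⟩ := Submodule.mkQ_surjective K' q
      exact ⟨(n, 0), rfl⟩
    have h2 : Function.Surjective ((LinearMap.ker c).liftQ ψ hker) := by
      intro q
      obtain ⟨x, hx⟩ := h1 q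
      exact ⟨Submodule.Quotient.mk x, by rwa [Submodule.liftQ_apply]⟩
    exact h2.comp e.symm.surjective
  set φ : (M × ↥N) →ₗ[R] (↥N ⧸ K') :=
    (β.comp (LinearMap.fst R M ↥N)) - ((K'.mkQ).comp (LinearMap.snd R M ↥N)) with hφdef
  set P : Submodule R (M × ↥N) := LinearMap.ker φ with hPdef
  have hmemP : ∀ (m : M) (n : ↥N), ((m, n) ∈ P ↔ β m = K'.mkQ n) := by
    intro m n
    simp only [hPdef, LinearMap.mem_ker, hφdef, LinearMap.sub_apply, LinearMap.comp_apply,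
      LinearMap.fst_apply, LinearMap.snd_apply, sub_eq_zero]
  set g : ↥P →ₗ[R] M := (LinearMap.fst R M ↥N).comp P.subtype with hgdef
  have hg : Function.Surjective g := by
    intro m
    obtain ⟨n, hn⟩ := Submodule.mkQ_surjective K' (β m)
    exact ⟨⟨(m, n), (hmemP m n).mpr hn.symm⟩, rfl⟩
  have hsub : ∀ k : ↥K,
      ((LinearMap.inr R M ↥N).comp (Submodule.inclusion hKN)) k ∈ P := by
    intro k
    rw [LinearMap.comp_apply, LinearMap.inr_apply, hmemP, map_zero]
    symm
    rw [Submodule.mkQ_apply, Submodule.Quotient.mk_eq_zero, hK'def, Submodule.mem_comap,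
      Submodule.coe_subtype, Submodule.coe_inclusion]
    exact k.2
  set f : ↥K →ₗ[R] ↥P :=
    LinearMap.codRestrict P ((LinearMap.inr R M ↥N).comp (Submodule.inclusion hKN)) hsub
    with hfdef
  have hf : Function.Injective f := by
    intro k k' h
    have h2 := congrArg Subtype.val h
    have h3 := (Prod.ext_iff.mp h2).2
    exact Submodule.inclusion_injective hKN h3
  have hrange : LinearMap.range f = LinearMap.ker g := by
    apply le_antisymm
    · rintro _ ⟨k, rfl⟩
      rw [LinearMap.mem_ker]
      rfl
    · rintro ⟨⟨m, n⟩, hmn⟩ hker0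
      have hm : m = 0 := hker0
      subst hm
      have hnK : (n : M) ∈ K := by
        have h4 := (hmemP 0 n).mp hmn
        rw [map_zero] at h4
        have h5 : K'.mkQ n = 0 := h4.symm
        rw [Submodule.mkQ_apply, Submodule.Quotient.mk_eq_zero, hK'def,
          Submodule.mem_comap, Submodule.coe_subtype] at h5
        exact h5
      refine ⟨⟨(n : M), hnK⟩, ?_⟩
      apply Subtype.ext
      apply Prod.ext
      · rfl
      · apply Subtype.ext
        rfl
  haveI : Module.Finite R ↥N := Module.Finite.iff_fg.mpr (IsNoetherian.noetherian N)
  haveI : Module.Finite R ↥P := Module.Finite.iff_fg.mpr (IsNoetherian.noetherian P)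
  have hP : CC C ↥P := hext (ModuleCat.of R ↥K) (ModuleCat.of R ↥P) (ModuleCat.of R M)
    (inferInstanceAs (Module.Finite R ↥P)) f g hf hg hrange hK hM
  set θ : ↥P →ₗ[R] M := (N.subtype).comp ((LinearMap.snd R M ↥N).comp P.subtype) with hθdef
  have h := himg (ModuleCat.of R ↥P) hP (ModuleCat.of R M) hM θ
  have hθr : LinearMap.range θ = N := by
    apply le_antisymm
    · rintro _ ⟨p, rfl⟩
      exact (p.1.2).2
    · intro n hn
      obtain ⟨m, hm⟩ := hβ (K'.mkQ ⟨n, hn⟩)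
      exact ⟨⟨(m, ⟨n, hn⟩), (hmemP _ _).mpr hm⟩, rfl⟩
  rwa [hθr] at h

end Core

section Main
variable {R : Type u} [CommRing R] [IsNoetherianRing R]
variable {C : Set (ModuleCat.{u} R)}

private lemma ieSubmoduleClosed (hC : IsModSubcat R C) (himg : ImagesClosed R C)
    (hext : ExtClosed R C) : SubmoduleClosed R C := by
  intro M hM N
  haveI : Module.Finite R ↑M := hC.2.2 M hM
  refine IsNoetherian.induction (P := fun N => ModuleCat.of R ↥N ∈ C) (fun N ih => ?_) N
  by_cases hN : N = ⊤
  · subst hN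
    exact mem_of_equiv hC (Submodule.topEquiv (R := R) (M := ↑M)).symm hM
  · obtain ⟨u, hu⟩ : ∃ u, u ∉ N := by
      by_contra h
      push_neg at h
      exact hN (Submodule.eq_top_iff'.mpr h)
    set N₁ : Submodule R ↑M := N ⊔ Submodule.span R {u} with hN₁def
    have huN₁ : u ∈ N₁ := by
      rw [hN₁def]
      exact (le_sup_right : Submodule.span R {u} ≤ _) (Submodule.mem_span_singleton_self u)
    have hlt : N < N₁ := lt_of_le_of_ne le_sup_left (fun h => hu (by rw [h]; exact huN₁))
    have hN₁mem : CC C ↥N₁ := ih N₁ hlt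
    set N' : Submodule R ↥N₁ := N.comap N₁.subtype with hN'def
    have hNle : N ≤ N₁ := le_sup_left
    have hu' : N' ⊔ Submodule.span R {(⟨u, huN₁⟩ : ↥N₁)} = ⊤ := by
      rw [Submodule.eq_top_iff']
      rintro ⟨x, hx⟩
      have hx' : x ∈ N ⊔ Submodule.span R {u} := by rw [← hN₁def]; exact hx
      obtain ⟨y, hy, z, hz, hyz⟩ := Submodule.mem_sup.mp hx'
      obtain ⟨s, rfl⟩ := Submodule.mem_span_singleton.mp hz
      refine Submodule.mem_sup.mpr
        ⟨⟨y, hNle hy⟩, ?_, s • (⟨u, huN₁⟩ : ↥N₁), ?_, ?_⟩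
      · show y ∈ N
        exact hy
      · exact Submodule.smul_mem _ s (Submodule.mem_span_singleton_self _)
      · apply Subtype.ext
        exact hyz
    have hres := cyclicStep hC himg hext hN₁mem N' (⟨u, huN₁⟩ : ↥N₁) hu'
    exact mem_of_equiv hC (Submodule.comapSubtypeEquivOfLe hNle) hres

end Main

/-!
STATEMENT 1: For a commutative noetherian ring `R` and a subcategory `𝒞` of `mod R`,
TFAE: (1) `𝒞` is a torsion-free class (closed under submodules and extensions);
(2) `𝒞` is IKE-closed (closed under images, kernels and extensions);
(3) `𝒞` is IE-closed (closed under images and extensions).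
-/

theorem torsionFree_iff_ike_iff_ie (R : Type u) [CommRing R] [IsNoetherianRing R]
    (C : Set (ModuleCat.{u} R)) (hC : IsModSubcat R C) :
    List.TFAE
      [SubmoduleClosed R C ∧ ExtClosed R C,
       ImagesClosed R C ∧ KernelsClosed R C ∧ ExtClosed R C,
       ImagesClosed R C ∧ ExtClosed R C] := by
  tfae_have 1 → 2 := fun ⟨hsub, hext⟩ =>
    ⟨fun M₁ _ M₂ h₂ f => hsub M₂ h₂ (LinearMap.range f),
     fun M₁ h₁ M₂ _ f => hsub M₁ h₁ (LinearMap.ker f), hext⟩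
  tfae_have 2 → 3 := fun ⟨hi, _, he⟩ => ⟨hi, he⟩
  tfae_have 3 → 1 := fun ⟨hi, he⟩ => ⟨ieSubmoduleClosed hC hi he, he⟩
  tfae_finish
end

section
/- Let Λ be a right artinian local ring and let 𝒞 be an IE-closed subcategory of the category of finitely generated right Λ-modules (closed under images and extensions). Then either 𝒞 consists only of the zero module or 𝒞 contains every finitely generated right Λ-module. In particular, every IE-closed subcategory of mod Λ is a Serre subcategory. -/
/-!
A nonzero `M ∈ 𝒞` has finite length, so it has a simple quotient `M ⧸ m` and a simple
submodule `a`. Over a local ring every maximal left ideal is the set of nonunits, so all simple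
modules are isomorphic; hence the composite `M ↠ M ⧸ m ≃ a ↪ M` has image `a`, and closure under
images and isomorphisms puts every simple module into `𝒞`. Closure under extensions then gives
every module of finite length, which over an artinian ring means every finitely generated module.
-/

universe u

namespace IsLocalRing

variable {R : Type*} [Ring R] [IsLocalRing R]

instance : IsDedekindFiniteMonoid R where
  mul_eq_one_symm {a b} hab := by
    rcases isUnit_or_isUnit_of_add_one (add_sub_cancel (b * a) 1) with ⟨u, hu⟩ | ⟨u, hu⟩
    · have hb : b * (a * u⁻¹) = 1 := by rw [← mul_assoc, ← hu, Units.mul_inv]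
      have : a * u⁻¹ = a := by
        rw [← one_mul (a * _), ← hab, mul_assoc, hb, mul_one]
      rwa [this] at hb
    · have hb : (1 - b * a) * b = 0 := by rw [sub_mul, one_mul, mul_assoc, hab, mul_one, sub_self]
      rw [← hu, Units.mul_right_eq_zero] at hb
      simp [hb] at hab

instance : IsLocalRing Rᵐᵒᵖ where
  isUnit_or_isUnit_of_add_one {a b} h := by
    simpa using isUnit_or_isUnit_of_add_one (congrArg MulOpposite.unop h)

theorem eq_nonunits_of_isMaximal {I : Ideal R} (hI : I.IsMaximal) : (I : Set R) = nonunits R := by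
  ext x
  refine ⟨fun hx hu => hI.ne_top (I.eq_top_of_isUnit_mem hx hu), fun hx => ?_⟩
  by_contra hxI
  obtain ⟨y, i, hi, hyx⟩ := hI.exists_inv hxI
  rcases isUnit_or_isUnit_of_add_one hyx with hu | hu
  · exact hx (isUnit_of_mul_isUnit_right hu)
  · exact hI.ne_top (I.eq_top_of_isUnit_mem hi hu)

theorem eq_of_isMaximal {I J : Ideal R} (hI : I.IsMaximal) (hJ : J.IsMaximal) : I = J :=
  SetLike.coe_injective <| (eq_nonunits_of_isMaximal hI).trans (eq_nonunits_of_isMaximal hJ).symm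

theorem nonempty_linearEquiv_of_isSimpleModule {M N : Type*} [AddCommGroup M] [Module R M]
    [AddCommGroup N] [Module R N] [IsSimpleModule R M] [IsSimpleModule R N] :
    Nonempty (M ≃ₗ[R] N) := by
  obtain ⟨I, hI, ⟨e⟩⟩ := isSimpleModule_iff_quot_maximal.mp ‹IsSimpleModule R M›
  obtain ⟨J, hJ, ⟨f⟩⟩ := isSimpleModule_iff_quot_maximal.mp ‹IsSimpleModule R N›
  cases eq_of_isMaximal hI hJ
  exact ⟨e.trans f.symm⟩

end IsLocalRing

section ModSubcat

variable {A : Type u} [Ring A] {C : Set (ModuleCat.{u} A)}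

theorem IsModSubcat.mem_of_isSimpleModule [IsArtinianRing A] [IsLocalRing A]
    (hC : IsModSubcat A C) (him : ImagesClosed A C) {M : ModuleCat.{u} A} (hM : M ∈ C)
    [Nontrivial M] (S : ModuleCat.{u} A) [IsSimpleModule A S] : S ∈ C := by
  have : Module.Finite A M := hC.2.2 M hM
  obtain ⟨m, hm⟩ := IsCoatomic.exists_coatom (Submodule A M)
  obtain ⟨a, ha⟩ := IsAtomic.exists_atom (Submodule A M)
  have := isSimpleModule_iff_isCoatom.mpr hm
  have := isSimpleModule_iff_isAtom.mpr ha
  obtain ⟨e⟩ := IsLocalRing.nonempty_linearEquiv_of_isSimpleModule (R := A) (M := M ⧸ m) (N := a)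
  have hrange : LinearMap.range (a.subtype ∘ₗ e.toLinearMap ∘ₗ m.mkQ) = a := by
    rw [LinearMap.range_comp, LinearMap.range_comp, Submodule.range_mkQ, Submodule.map_top,
      LinearEquiv.range, Submodule.map_subtype_top]
  obtain ⟨f⟩ := IsLocalRing.nonempty_linearEquiv_of_isSimpleModule (R := A) (M := a) (N := S)
  exact hC.1 _ _ f (hrange ▸ him M hM M hM _)

theorem IsModSubcat.mem_of_isFiniteLength (hC : IsModSubcat A C) (hext : ExtClosed A C)
    (hsimple : ∀ S : ModuleCat.{u} A, IsSimpleModule A S → S ∈ C)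
    {M : Type u} [AddCommGroup M] [Module A M] (hM : IsFiniteLength A M) :
    ModuleCat.of A M ∈ C := by
  induction hM with
  | of_subsingleton => exact hC.2.1 _ ‹_›
  | @of_simple_quotient M _ _ N _ hN ih =>
    have : IsNoetherian A M := (isFiniteLength_iff_isNoetherian_isArtinian.mp
      (.of_simple_quotient hN)).1
    exact hext (.of A N) (.of A M) (.of A (M ⧸ N)) inferInstance N.subtype N.mkQ
      N.injective_subtype N.mkQ_surjective (by rw [N.range_subtype, N.ker_mkQ]) ih
      (hsimple _ ‹_›)

theorem IsModSubcat.submoduleClosed_and_quotClosed_of_subsingleton (hC : IsModSubcat A C)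
    (h : ∀ M ∈ C, Subsingleton M) : SubmoduleClosed A C ∧ QuotClosed A C := by
  refine ⟨fun M hM N => hC.2.1 _ ?_, fun M hM N => hC.2.1 _ ?_⟩
  · have := h M hM
    exact inferInstanceAs (Subsingleton N)
  · have := h M hM
    exact inferInstanceAs (Subsingleton (M ⧸ N))

theorem IsModSubcat.submoduleClosed_and_quotClosed_of_forall_finite [IsNoetherianRing A]
    (hC : IsModSubcat A C) (h : ∀ M : ModuleCat.{u} A, Module.Finite A M → M ∈ C) :
    SubmoduleClosed A C ∧ QuotClosed A C := by
  refine ⟨fun M hM N => h _ ?_, fun M hM N => h _ ?_⟩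
  · have := hC.2.2 M hM
    exact inferInstanceAs (Module.Finite A N)
  · have := hC.2.2 M hM
    exact inferInstanceAs (Module.Finite A (M ⧸ N))

end ModSubcat

theorem ie_closed_of_artinian_local
    (Λ : Type u) [Ring Λ] [IsArtinianRing Λᵐᵒᵖ] [IsLocalRing Λ]
    (C : Set (ModuleCat.{u} Λᵐᵒᵖ)) (hC : IsModSubcat Λᵐᵒᵖ C)
    (him : ImagesClosed Λᵐᵒᵖ C) (hext : ExtClosed Λᵐᵒᵖ C) :
    ((∀ M ∈ C, Subsingleton M) ∨
      (∀ M : ModuleCat.{u} Λᵐᵒᵖ, Module.Finite Λᵐᵒᵖ M → M ∈ C)) ∧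
    (SubmoduleClosed Λᵐᵒᵖ C ∧ QuotClosed Λᵐᵒᵖ C) := by
  by_cases htriv : ∀ M ∈ C, Subsingleton M
  · exact ⟨.inl htriv, hC.submoduleClosed_and_quotClosed_of_subsingleton htriv⟩
  push Not at htriv
  obtain ⟨M₀, hM₀C, hM₀⟩ := htriv
  have hall (M : ModuleCat.{u} Λᵐᵒᵖ) (hM : Module.Finite Λᵐᵒᵖ M) : M ∈ C :=
    hC.mem_of_isFiniteLength hext (fun S _ => hC.mem_of_isSimpleModule him hM₀C S)
      (((IsArtinianRing.tfae Λᵐᵒᵖ M).out 0 3).mp hM)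
  exact ⟨.inr hall, hC.submoduleClosed_and_quotClosed_of_forall_finite hall⟩
end

section
/- Let Λ be a right noetherian ring such that every torsion-free class of the category of finitely generated right Λ-modules is a Serre subcategory. Then every nonzero finitely generated right Λ-module has a simple submodule. -/
universe u

/-!
STATEMENT 9: Let `Λ` be a right noetherian ring such that every torsion-free class of
`mod Λ` (finitely generated right `Λ`-modules, encoded as `Λᵐᵒᵖ`-modules) is a Serre
subcategory. Then every nonzero finitely generated right `Λ`-module has a simple submodule.
-/

theorem exists_simple_submodule_of_torsionFree_serre
    (Λ : Type u) [Ring Λ] [IsNoetherianRing Λᵐᵒᵖ]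
    (h : ∀ C : Set (ModuleCat.{u} Λᵐᵒᵖ), IsModSubcat Λᵐᵒᵖ C →
      SubmoduleClosed Λᵐᵒᵖ C → ExtClosed Λᵐᵒᵖ C → QuotClosed Λᵐᵒᵖ C)
    (M : Type u) [AddCommGroup M] [Module Λᵐᵒᵖ M] [Module.Finite Λᵐᵒᵖ M]
    (hM : Nontrivial M) :
    ∃ N : Submodule Λᵐᵒᵖ M, IsSimpleModule Λᵐᵒᵖ N := by
  by_contra hno
  push_neg at hno
  classical
  let C : Set (ModuleCat.{u} Λᵐᵒᵖ) :=
    {X | Module.Finite Λᵐᵒᵖ X ∧ ∀ P : Submodule Λᵐᵒᵖ X, ¬ IsSimpleModule Λᵐᵒᵖ P}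
  have hsub : IsModSubcat Λᵐᵒᵖ C := by
    refine ⟨?_, ?_, fun X hX => hX.1⟩
    · rintro X Y e ⟨hfin, hX⟩
      refine ⟨Module.Finite.equiv e, fun P hP => ?_⟩
      haveI := hP
      exact hX (P.map e.symm.toLinearMap)
        (IsSimpleModule.congr (e.symm.submoduleMap P).symm)
    · intro X hX
      haveI := hX
      refine ⟨Module.Finite.of_surjective (0 : (Fin 0 → Λᵐᵒᵖ) →ₗ[Λᵐᵒᵖ] X)
        (fun x => ⟨0, Subsingleton.elim _ _⟩), fun P hP => ?_⟩
      haveI := hP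
      exact (IsSimpleOrder.bot_ne_top : (⊥ : Submodule Λᵐᵒᵖ P) ≠ ⊤)
        (Subsingleton.elim _ _)
  have hsm : SubmoduleClosed Λᵐᵒᵖ C := by
    rintro X ⟨hfin, hX⟩ N
    haveI := hfin
    haveI : IsNoetherian Λᵐᵒᵖ X := isNoetherian_of_isNoetherianRing_of_finite _ _
    refine ⟨inferInstanceAs (Module.Finite Λᵐᵒᵖ N), fun P hP => ?_⟩
    let P' : Submodule Λᵐᵒᵖ N := P
    haveI : IsSimpleModule Λᵐᵒᵖ P' := hP
    exact hX (P'.map N.subtype)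
      (IsSimpleModule.congr
        (Submodule.equivMapOfInjective N.subtype N.injective_subtype P').symm)
  have hext : ExtClosed Λᵐᵒᵖ C := by
    rintro L X N hfinX f g hf hg hfg ⟨hfL, hL⟩ ⟨hfN, hN⟩
    refine ⟨hfinX, fun P hP => ?_⟩
    haveI := hP
    set q := g.comp P.subtype with hq
    rcases eq_bot_or_eq_top (LinearMap.ker q) with hk | hk
    · have hinj : Function.Injective q := LinearMap.ker_eq_bot.mp hk
      exact hN (LinearMap.range q)
        (IsSimpleModule.congr (LinearEquiv.ofInjective q hinj).symm)
    · have hPle : P ≤ LinearMap.ker g := by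
        intro x hx
        have hx' : (⟨x, hx⟩ : P) ∈ LinearMap.ker q := hk ▸ Submodule.mem_top
        simpa [hq] using hx'
      rw [← hfg] at hPle
      have hmap : (P.comap f).map f = P := by
        rw [Submodule.map_comap_eq, inf_eq_right.mpr hPle]
      exact hL (P.comap f)
        (IsSimpleModule.congr
          ((Submodule.equivMapOfInjective f hf _).trans (LinearEquiv.ofEq _ _ hmap)))
  have hqc := h C hsub hsm hext
  have hMC : ModuleCat.of Λᵐᵒᵖ M ∈ C := ⟨‹Module.Finite Λᵐᵒᵖ M›, hno⟩
  haveI : IsNoetherian Λᵐᵒᵖ M := isNoetherian_of_isNoetherianRing_of_finite _ _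
  have hbot : (⊥ : Submodule Λᵐᵒᵖ M) ≠ ⊤ := by
    simp
  obtain ⟨m, hm, -⟩ :=
    ((eq_top_or_exists_le_coatom (⊥ : Submodule Λᵐᵒᵖ M)).resolve_left hbot)
  have hquot := hqc _ hMC m
  haveI : IsSimpleModule Λᵐᵒᵖ (M ⧸ m) := isSimpleModule_iff_isCoatom.mpr hm
  have htop : IsSimpleModule Λᵐᵒᵖ ↥(⊤ : Submodule Λᵐᵒᵖ (M ⧸ m)) :=
    IsSimpleModule.congr Submodule.topEquiv
  exact hquot.2 ⊤ htop
end

section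
/- Let Λ be a right noetherian ring such that every nonzero finitely generated right Λ-module has a simple submodule. Then Λ is right artinian. -/
/-!
Noetherian induction on `N` shows that every quotient `M ⧸ N` is artinian: a simple submodule
`S` of `M ⧸ N` is artinian, and `(M ⧸ N) ⧸ S ≅ M ⧸ N'` for the strictly larger submodule
`N' = S.comap N.mkQ`, so `M ⧸ N` is an extension of artinian modules. Take `N = ⊥`.
-/

universe u

namespace Submodule

variable {R M : Type*} [Ring R] [AddCommGroup M] [Module R M]

theorem lt_comap_mkQ_of_ne_bot (N : Submodule R M) {S : Submodule R (M ⧸ N)} (hS : S ≠ ⊥) :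
    N < S.comap N.mkQ := by
  simpa [comap_bot] using comap_strictMono_of_surjective N.mkQ_surjective (bot_lt_iff_ne_bot.mpr hS)

def quotientQuotientEquivQuotientComap (N : Submodule R M) (S : Submodule R (M ⧸ N)) :
    ((M ⧸ N) ⧸ S) ≃ₗ[R] M ⧸ S.comap N.mkQ :=
  quotEquivOfEq _ _ (map_comap_eq_of_surjective N.mkQ_surjective S).symm ≪≫ₗ
    quotientQuotientEquivQuotient N (S.comap N.mkQ) (le_comap_mkQ N S)

end Submodule

open Submodule in
theorem isArtinian_of_forall_quotient_exists_isSimpleModule {R M : Type*} [Ring R]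
    [AddCommGroup M] [Module R M] [IsNoetherian R M]
    (h : ∀ N : Submodule R M, N ≠ ⊤ → ∃ S : Submodule R (M ⧸ N), IsSimpleModule R S) :
    IsArtinian R M := by
  suffices ∀ N : Submodule R M, IsArtinian R (M ⧸ N) from
    isArtinian_of_linearEquiv (quotEquivOfEqBot ⊥ rfl)
  refine IsNoetherian.induction fun N ih ↦ ?_
  rcases eq_or_ne N ⊤ with rfl | hN
  · infer_instance
  obtain ⟨S, hS⟩ := h N hN
  have hS_ne_bot : S ≠ ⊥ := S.nontrivial_iff_ne_bot.mp (IsSimpleModule.nontrivial R S)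
  have : IsArtinian R (M ⧸ S.comap N.mkQ) := ih _ (N.lt_comap_mkQ_of_ne_bot hS_ne_bot)
  have : IsArtinian R ((M ⧸ N) ⧸ S) :=
    isArtinian_of_linearEquiv (N.quotientQuotientEquivQuotientComap S).symm
  exact (isArtinian_iff_submodule_quotient S).mpr ⟨inferInstance, this⟩

theorem isArtinian_of_simple_submodules
    (Λ : Type u) [Ring Λ] [IsNoetherianRing Λᵐᵒᵖ]
    (h : ∀ (M : Type u) [AddCommGroup M] [Module Λᵐᵒᵖ M], Module.Finite Λᵐᵒᵖ M →
      Nontrivial M → ∃ N : Submodule Λᵐᵒᵖ M, IsSimpleModule Λᵐᵒᵖ N) :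
    IsArtinianRing Λᵐᵒᵖ :=
  isArtinian_of_forall_quotient_exists_isSimpleModule fun _ hN ↦
    h _ inferInstance (Submodule.Quotient.nontrivial_iff.mpr hN)
end

section
/- Let Λ be a right artinian ring such that every torsion-free class of the category of finitely generated right Λ-modules is a Serre subcategory. Then for any two non-isomorphic simple right Λ-modules S and S', every short exact sequence 0 → S' → M → S → 0 of right Λ-modules splits; equivalently, Ext¹_Λ(S, S') = 0 whenever S ≇ S' are simple. -/
universe u

/-!
STATEMENT 11: Let `Λ` be a right artinian ring such that every torsion-free class of
`mod Λ` is a Serre subcategory. Then for any two non-isomorphic simple right `Λ`-modules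
`S` and `S'`, every short exact sequence `0 → S' → M → S → 0` of right `Λ`-modules splits
(equivalently, `Ext¹_Λ(S, S') = 0`). Right `Λ`-modules are encoded as `Λᵐᵒᵖ`-modules.
-/

theorem ses_of_simples_splits
    (Λ : Type u) [Ring Λ] [IsArtinianRing Λᵐᵒᵖ]
    (h : ∀ C : Set (ModuleCat.{u} Λᵐᵒᵖ), IsModSubcat Λᵐᵒᵖ C →
      SubmoduleClosed Λᵐᵒᵖ C → ExtClosed Λᵐᵒᵖ C → QuotClosed Λᵐᵒᵖ C)
    (S S' M : Type u)
    [AddCommGroup S] [Module Λᵐᵒᵖ S] [AddCommGroup S'] [Module Λᵐᵒᵖ S']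
    [AddCommGroup M] [Module Λᵐᵒᵖ M]
    (hS : IsSimpleModule Λᵐᵒᵖ S) (hS' : IsSimpleModule Λᵐᵒᵖ S')
    (hne : IsEmpty (S ≃ₗ[Λᵐᵒᵖ] S'))
    (f : S' →ₗ[Λᵐᵒᵖ] M) (g : M →ₗ[Λᵐᵒᵖ] S)
    (hf : Function.Injective f) (hg : Function.Surjective g)
    (hfg : LinearMap.range f = LinearMap.ker g) :
    ∃ s : S →ₗ[Λᵐᵒᵖ] M, g ∘ₗ s = LinearMap.id := by
  classical
  haveI := hS
  haveI := hS'
  haveI : Nontrivial S := IsSimpleModule.nontrivial Λᵐᵒᵖ S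
  by_cases hc : ∃ φ : S →ₗ[Λᵐᵒᵖ] M, Function.Injective φ
  · -- there is a copy of S inside M; it gives a splitting
    obtain ⟨φ, hφ⟩ := hc
    set k : S →ₗ[Λᵐᵒᵖ] S := g ∘ₗ φ with hk
    rcases (eq_bot_or_eq_top (LinearMap.ker k)) with hker | hker
    · -- k injective, hence bijective; splitting
      have hki : Function.Injective k := LinearMap.ker_eq_bot.mp hker
      have hrange : LinearMap.range k = ⊤ := by
        rcases eq_bot_or_eq_top (LinearMap.range k) with hb | ht
        · exfalso
          obtain ⟨x, hx⟩ := exists_ne (0 : S)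
          have : k x = 0 := by
            have : k x ∈ LinearMap.range k := ⟨x, rfl⟩
            rwa [hb, Submodule.mem_bot] at this
          exact hx (hki (by simpa using this))
        · exact ht
      have hks : Function.Surjective k := LinearMap.range_eq_top.mp hrange
      let e : S ≃ₗ[Λᵐᵒᵖ] S := LinearEquiv.ofBijective k ⟨hki, hks⟩
      refine ⟨φ ∘ₗ (e.symm : S →ₗ[Λᵐᵒᵖ] S), ?_⟩
      ext x
      have : k (e.symm x) = x := e.apply_symm_apply x
      simpa [k] using this
    · -- range φ ⊆ ker g = range f, producing S ≃ S', contradiction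
      exfalso
      have hmem : ∀ x : S, φ x ∈ LinearMap.range f := by
        intro x
        rw [hfg]
        have : x ∈ LinearMap.ker k := by rw [hker]; trivial
        simpa [k] using this
      let ψ : S →ₗ[Λᵐᵒᵖ] S' :=
        ((LinearEquiv.ofInjective f hf).symm : LinearMap.range f →ₗ[Λᵐᵒᵖ] S') ∘ₗ
          LinearMap.codRestrict (LinearMap.range f) φ hmem
      have hψ : Function.Injective ψ := by
        intro a b hab
        apply hφ
        have := congrArg (LinearEquiv.ofInjective f hf) (by exact hab :
          (LinearEquiv.ofInjective f hf).symm ⟨φ a, hmem a⟩ =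
          (LinearEquiv.ofInjective f hf).symm ⟨φ b, hmem b⟩)
        simpa using congrArg Subtype.val
          ((LinearEquiv.ofInjective f hf).symm.injective.eq_iff.mp hab)
      have hψr : LinearMap.range ψ = ⊤ := by
        rcases eq_bot_or_eq_top (LinearMap.range ψ) with hb | ht
        · exfalso
          obtain ⟨x, hx⟩ := exists_ne (0 : S)
          have : ψ x = 0 := by
            have : ψ x ∈ LinearMap.range ψ := ⟨x, rfl⟩
            rwa [hb, Submodule.mem_bot] at this
          exact hx (hψ (by simpa using this))
        · exact ht
      exact hne.false (LinearEquiv.ofBijective ψ ⟨hψ, LinearMap.range_eq_top.mp hψr⟩)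
  · -- no copy of S inside M: use the torsion-free class of modules with no sub ≅ S
    exfalso
    push_neg at hc
    set C : Set (ModuleCat.{u} Λᵐᵒᵖ) :=
      {X | IsNoetherian Λᵐᵒᵖ X ∧ ∀ φ : S →ₗ[Λᵐᵒᵖ] X, ¬Function.Injective φ} with hC
    have hsub : IsModSubcat Λᵐᵒᵖ C := by
      refine ⟨?_, ?_, ?_⟩
      · rintro X Y e ⟨h1, h2⟩
        refine ⟨isNoetherian_of_linearEquiv e, fun φ hφ => ?_⟩
        exact h2 ((e.symm : Y →ₗ[Λᵐᵒᵖ] X) ∘ₗ φ) (e.symm.injective.comp hφ)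
      · intro X hX
        haveI := hX
        refine ⟨inferInstance, fun φ hφ => ?_⟩
        obtain ⟨x, hx⟩ := exists_ne (0 : S)
        exact hx (hφ (Subsingleton.elim _ _))
      · rintro X ⟨h1, _⟩
        haveI := h1
        infer_instance
    have hsc : SubmoduleClosed Λᵐᵒᵖ C := by
      rintro X ⟨h1, h2⟩ N
      haveI := h1
      refine ⟨(inferInstance : IsNoetherian Λᵐᵒᵖ N), fun φ hφ => ?_⟩
      exact h2 (N.subtype ∘ₗ φ) (N.injective_subtype.comp hφ)
    have hec : ExtClosed Λᵐᵒᵖ C := by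
      rintro L X N _ u v hu hv huv ⟨hL1, hL2⟩ ⟨hN1, hN2⟩
      haveI := hL1; haveI := hN1
      refine ⟨isNoetherian_of_range_eq_ker u v huv, fun φ hφ => ?_⟩
      rcases eq_bot_or_eq_top (LinearMap.ker (v ∘ₗ φ)) with hker | hker
      · exact hN2 (v ∘ₗ φ) (LinearMap.ker_eq_bot.mp hker)
      · have hmem : ∀ x : S, φ x ∈ LinearMap.range u := by
          intro x
          rw [huv]
          have : x ∈ LinearMap.ker (v ∘ₗ φ) := by rw [hker]; trivial
          simpa using this
        have : Function.Injective
            (((LinearEquiv.ofInjective u hu).symm : LinearMap.range u →ₗ[Λᵐᵒᵖ] L) ∘ₗ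
              LinearMap.codRestrict (LinearMap.range u) φ hmem) := by
          apply Function.Injective.comp (LinearEquiv.ofInjective u hu).symm.injective
          intro a b hab
          exact hφ (congrArg Subtype.val hab)
        exact hL2 _ this
    have hqc := h C hsub hsc hec
    have hSnoeth : IsNoetherian Λᵐᵒᵖ S := inferInstance
    have hS'noeth : IsNoetherian Λᵐᵒᵖ S' := inferInstance
    have hMC : ModuleCat.of Λᵐᵒᵖ M ∈ C := by
      exact ⟨isNoetherian_of_range_eq_ker f g hfg, fun φ hφ => hc φ hφ⟩
    have hquot := hqc (ModuleCat.of Λᵐᵒᵖ M) hMC (LinearMap.range f)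
    obtain ⟨_, h2⟩ := hquot
    -- M ⧸ range f ≃ S, so S embeds in it, contradiction
    have e : (M ⧸ LinearMap.range f) ≃ₗ[Λᵐᵒᵖ] S :=
      (Submodule.quotEquivOfEq _ _ hfg).trans (g.quotKerEquivOfSurjective hg)
    exact h2 (e.symm : S →ₗ[Λᵐᵒᵖ] (M ⧸ LinearMap.range f)) e.symm.injective
end

section
/- Let R be a commutative noetherian ring. Then R is artinian if and only if every torsion-free class of the category of finitely generated R-modules is a Serre subcategory (i.e., every class of finitely generated R-modules closed under submodules and extensions is also closed under quotient modules). -/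
universe u

/-!
For a prime `p`, the finitely generated `p`-torsion-free modules form a torsion-free class
containing `R ⧸ p`; if it is closed under quotients it contains `R ⧸ m` for a maximal `m ⊇ p`,
which forces `p = m`. So all primes are maximal and the noetherian ring `R` is artinian.

Conversely, over an artinian ring every maximal ideal `m` containing the annihilator of a
finitely generated module `M` is an associated prime of `M` (it is a minimal prime of the
annihilator), so `R ⧸ m` embeds into `M`. Hence every simple subquotient of a module in a
torsion-free class `C` lies in `C`, and an induction on the kernel of a surjection `M → X`,
peeling off a simple submodule of `X`, shows that `X ∈ C` by closure under extensions.
-/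

section SMulRegularClass

variable {A : Type u} [Ring A]

def smulRegularClass (S : Set A) : Set (ModuleCat.{u} A) :=
  {X | Module.Finite A X ∧ ∀ s ∈ S, IsSMulRegular X s}

variable (S : Set A)

lemma isModSubcat_smulRegularClass : IsModSubcat A (smulRegularClass S) := by
  refine ⟨?_, ?_, fun X hX => hX.1⟩
  · rintro X Y e ⟨hfin, hreg⟩
    exact ⟨Module.Finite.equiv e, fun s hs => (e.isSMulRegular_congr s).mp (hreg s hs)⟩
  · intro X _
    have : Finite X := Finite.of_subsingleton
    exact ⟨Module.Finite.of_finite, fun _ _ _ _ _ => Subsingleton.elim _ _⟩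

lemma submoduleClosed_smulRegularClass [IsNoetherianRing A] :
    SubmoduleClosed A (smulRegularClass S) := by
  rintro X ⟨hfin, hreg⟩ N
  exact ⟨inferInstance, fun s hs => (hreg s hs).submodule N s⟩

lemma extClosed_smulRegularClass : ExtClosed A (smulRegularClass S) :=
  fun _ _ _ hfin _ _ hf _ hfg hL hN =>
    ⟨hfin, fun s hs => isSMulRegular_of_range_eq_ker hf hfg (hL.2 s hs) (hN.2 s hs)⟩

end SMulRegularClass

section Noetherian

variable {R : Type u} [CommRing R]

lemma Ideal.IsPrime.quotient_mem_smulRegularClass_compl {p : Ideal R} (hp : p.IsPrime) :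
    ModuleCat.of R (R ⧸ p) ∈ smulRegularClass (p : Set R)ᶜ := by
  refine ⟨inferInstance, fun s hs => ?_⟩
  refine (isSMulRegular_quotient_iff_mem_of_smul_mem p s).mpr fun x hsx => ?_
  exact (hp.mem_or_mem hsx).resolve_left hs

lemma Ideal.IsPrime.isMaximal_of_quotClosed {p : Ideal R} (hp : p.IsPrime)
    (hquot : QuotClosed R (smulRegularClass (p : Set R)ᶜ)) : p.IsMaximal := by
  obtain ⟨m, hm, hpm⟩ := p.exists_le_maximal hp.ne_top
  obtain rfl | hlt := hpm.eq_or_lt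
  · exact hm
  obtain ⟨a, ham, hap⟩ := SetLike.exists_of_lt hlt
  exfalso
  let N : Submodule R (R ⧸ p) := Submodule.map p.mkQ m
  have hreg : IsSMulRegular ((R ⧸ p) ⧸ N) a :=
    (hquot _ hp.quotient_mem_smulRegularClass_compl N).2 a hap
  have h1 : p.mkQ 1 ∈ N := by
    refine (isSMulRegular_quotient_iff_mem_of_smul_mem N a).mp hreg _ ?_
    rw [← map_smul, smul_eq_mul, mul_one]
    exact Submodule.mem_map_of_mem ham
  rw [← Submodule.mem_comap, Submodule.comap_map_mkQ, sup_eq_right.mpr hpm] at h1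
  exact hm.ne_top ((Ideal.eq_top_iff_one m).mpr h1)

lemma isArtinianRing_of_quotClosed_smulRegularClass [IsNoetherianRing R]
    (h : ∀ p : Ideal R, p.IsPrime → QuotClosed R (smulRegularClass (p : Set R)ᶜ)) :
    IsArtinianRing R :=
  isArtinianRing_iff_krullDimLE_zero.mpr
    (Ring.KrullDimLE.mk₀ fun p hp => hp.isMaximal_of_quotClosed (h p hp))

end Noetherian

section Artinian

variable {R : Type u} [CommRing R] [IsArtinianRing R]

lemma exists_injective_quotient_of_annihilator_le {M : Type*} [AddCommGroup M] [Module R M]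
    [Module.Finite R M] (m : Ideal R) [m.IsMaximal] (h : Module.annihilator R M ≤ m) :
    ∃ f : R ⧸ m →ₗ[R] M, Function.Injective f :=
  ((isAssociatedPrime_iff_exists_injective_linearMap m M).mp
    (Module.associatedPrimes.minimalPrimes_annihilator_subset_associatedPrimes R M
      (Ring.KrullDimLE.mem_minimalPrimes_iff_le_of_isPrime.mpr h))).2

variable {C : Set (ModuleCat.{u} R)}

lemma IsModSubcat.mem_of_isSimpleModule_s12 (hC : IsModSubcat R C) (hsub : SubmoduleClosed R C)
    {M : ModuleCat.{u} R} (hM : M ∈ C) (S : Type u) [AddCommGroup S] [Module R S]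
    [IsSimpleModule R S] (hS : Module.annihilator R M ≤ Module.annihilator R S) :
    ModuleCat.of R S ∈ C := by
  obtain ⟨m, hm, ⟨e⟩⟩ := isSimpleModule_iff_quot_maximal.mp ‹IsSimpleModule R S›
  have : Module.Finite R M := hC.2.2 M hM
  rw [e.annihilator_eq, m.annihilator_quotient] at hS
  obtain ⟨f, hf⟩ := exists_injective_quotient_of_annihilator_le m hS
  exact hC.1 (ModuleCat.of R (LinearMap.range f)) _ (e.trans (LinearEquiv.ofInjective f hf)).symm
    (hsub M hM _)

lemma IsModSubcat.mem_of_surjective (hC : IsModSubcat R C) (hsub : SubmoduleClosed R C)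
    (hext : ExtClosed R C) {M : ModuleCat.{u} R} (hM : M ∈ C) (X : Type u) [AddCommGroup X]
    [Module R X] (g : M →ₗ[R] X) (hg : Function.Surjective g) : ModuleCat.of R X ∈ C := by
  have : Module.Finite R M := hC.2.2 M hM
  induction hker : LinearMap.ker g using WellFoundedGT.induction generalizing X with
  | _ N ih =>
    have hXfin : Module.Finite R X := Module.Finite.of_surjective g hg
    obtain hX | ⟨A, hA, -⟩ := eq_bot_or_exists_atom_le (⊤ : Submodule R X)
    · exact hC.2.1 _ ((Submodule.subsingleton_iff R).mp (subsingleton_of_bot_eq_top hX.symm))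
    have : IsSimpleModule R A := isSimpleModule_iff_isAtom.mpr hA
    have hAC : ModuleCat.of R A ∈ C :=
      hC.mem_of_isSimpleModule_s12 hsub hM A
        ((g.annihilator_le_of_surjective hg).trans
          (A.subtype.annihilator_le_of_injective A.injective_subtype))
    have hlt : N < LinearMap.ker (A.mkQ ∘ₗ g) := by
      rw [← hker, LinearMap.ker_comp, Submodule.ker_mkQ, LinearMap.ker]
      exact Submodule.comap_strictMono_of_surjective hg hA.bot_lt
    have hQC : ModuleCat.of R (X ⧸ A) ∈ C :=
      ih _ hlt _ (A.mkQ ∘ₗ g) (A.mkQ_surjective.comp hg) rfl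
    exact hext (ModuleCat.of R A) (ModuleCat.of R X) (ModuleCat.of R (X ⧸ A)) hXfin
      A.subtype A.mkQ A.injective_subtype A.mkQ_surjective
      (A.range_subtype.trans A.ker_mkQ.symm) hAC hQC

lemma IsModSubcat.quotClosed (hC : IsModSubcat R C) (hsub : SubmoduleClosed R C)
    (hext : ExtClosed R C) : QuotClosed R C :=
  fun _ hM N => hC.mem_of_surjective hsub hext hM _ N.mkQ N.mkQ_surjective

end Artinian

theorem artinian_iff_torsionFree_eq_serre
    (R : Type u) [CommRing R] [IsNoetherianRing R] :
    IsArtinianRing R ↔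
      ∀ C : Set (ModuleCat.{u} R), IsModSubcat R C →
        SubmoduleClosed R C → ExtClosed R C → QuotClosed R C :=
  ⟨fun _ _ hC hsub hext => hC.quotClosed hsub hext,
    fun h => isArtinianRing_of_quotClosed_smulRegularClass fun _ _ =>
      h _ (isModSubcat_smulRegularClass _) (submoduleClosed_smulRegularClass _)
        (extClosed_smulRegularClass _)⟩
end

section
/- Let Λ be a right noetherian ring. Then Λ is right artinian if and only if for every torsion-free class ℱ of the category of finitely generated right Λ-modules there exists a class 𝒯 of finitely generated right Λ-modules such that (𝒯, ℱ) is a torsion pair in mod Λ. -/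
universe u

/-!
If `Λ` is right artinian, every finitely generated module `X` is artinian (and, by
Hopkins–Levitzki, noetherian), so there is a minimal submodule `P` with `X ⧸ P ∈ ℱ`. Every map
`f : P → Y` with `Y ∈ ℱ` vanishes: `P ⧸ ker f ≅ im f ∈ ℱ` and `X ⧸ P ∈ ℱ`, so by extension
closure `X ⧸ ker f ∈ ℱ`, and minimality forces `ker f = P`. Hence the left orthogonal of `ℱ` is
the required torsion class.

Conversely, apply the hypothesis to the torsion-free class of modules of finite length and
decompose `Λ` as `0 → N → Λ → Λ ⧸ N → 0`. The torsion part `N` is finitely generated, so if it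
were nonzero it would have a simple quotient, which has finite length; hence `N = 0` and `Λ`
itself has finite length.
-/

variable {A : Type u} [Ring A]

def IsTorsionPair (T F : Set (ModuleCat.{u} A)) : Prop :=
  IsModSubcat A T ∧ (∀ X ∈ T, ∀ Y ∈ F, ∀ f : X →ₗ[A] Y, f = 0) ∧
    ∀ X : ModuleCat.{u} A, Module.Finite A X →
      ∃ N : Submodule A X, ModuleCat.of A N ∈ T ∧ ModuleCat.of A (X ⧸ N) ∈ F

section LeftOrthogonal

def leftOrthogonal (F : Set (ModuleCat.{u} A)) : Set (ModuleCat.{u} A) :=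
  {X | Module.Finite A X ∧ ∀ Y ∈ F, ∀ f : X →ₗ[A] Y, f = 0}

theorem isModSubcat_leftOrthogonal (F : Set (ModuleCat.{u} A)) :
    IsModSubcat A (leftOrthogonal F) := by
  refine ⟨fun M N e hM => ⟨?_, fun Y hY f => ?_⟩, fun M _ => ⟨inferInstance, fun Y _ f => ?_⟩,
    fun M hM => hM.1⟩
  · have := hM.1
    exact Module.Finite.equiv e
  · have hfe : f ∘ₗ (e : M →ₗ[A] N) = 0 := hM.2 Y hY _
    ext x
    simpa using congrArg (fun g : M →ₗ[A] Y => g (e.symm x)) hfe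
  · ext x
    simp [Subsingleton.elim x 0]

theorem ExtClosed.quotient_mem_of_le {C : Set (ModuleCat.{u} A)} (hC : ExtClosed A C)
    {X : Type u} [AddCommGroup X] [Module A X] [Module.Finite A X] {K P : Submodule A X}
    (hKP : K ≤ P) (hPK : ModuleCat.of A (P ⧸ K.comap P.subtype) ∈ C)
    (hP : ModuleCat.of A (X ⧸ P) ∈ C) : ModuleCat.of A (X ⧸ K) ∈ C := by
  refine hC (ModuleCat.of A _) (ModuleCat.of A _) (ModuleCat.of A _) inferInstance
    ((K.comap P.subtype).mapQ K P.subtype le_rfl) (Submodule.factor hKP) ?_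
    (Submodule.factor_surjective hKP) ?_ hPK hP
  · rw [← LinearMap.ker_eq_bot, Submodule.ker_mapQ, Submodule.mkQ_map_self]
  · ext x
    obtain ⟨x, rfl⟩ := K.mkQ_surjective x
    rw [LinearMap.mem_ker, Submodule.factor_mk, ← LinearMap.mem_ker, Submodule.ker_mkQ]
    constructor
    · rintro ⟨y, hy⟩
      obtain ⟨⟨y, hyP⟩, rfl⟩ := Submodule.mkQ_surjective _ y
      rw [Submodule.mkQ_apply, Submodule.mapQ_apply, Submodule.subtype_apply,
        Submodule.mkQ_apply, Submodule.Quotient.eq] at hy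
      simpa using P.sub_mem hyP (hKP hy)
    · exact fun hx => ⟨Submodule.Quotient.mk ⟨x, hx⟩, rfl⟩

theorem mem_leftOrthogonal_of_minimal {F : Set (ModuleCat.{u} A)} (hmod : IsModSubcat A F)
    (hsub : SubmoduleClosed A F) (hext : ExtClosed A F) {X : Type u} [AddCommGroup X]
    [Module A X] [IsNoetherian A X] {P : Submodule A X}
    (hP : Minimal (fun P : Submodule A X => ModuleCat.of A (X ⧸ P) ∈ F) P) :
    ModuleCat.of A P ∈ leftOrthogonal F := by
  refine ⟨inferInstance, fun Y hY f => ?_⟩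
  set K := (LinearMap.ker f).map P.subtype
  have hK : K.comap P.subtype = LinearMap.ker f :=
    Submodule.comap_map_eq_of_injective P.injective_subtype _
  have hKP : K ≤ P := Submodule.map_subtype_le P _
  have hImage : ModuleCat.of A (P ⧸ K.comap P.subtype) ∈ F := by
    rw [hK]
    exact hmod.1 _ _ f.quotKerEquivRange.symm (hsub Y hY _)
  have hKeq : K = P := hP.eq_of_le (hext.quotient_mem_of_le hKP hImage hP.prop) hKP
  rw [← LinearMap.ker_eq_top, ← hK, hKeq, Submodule.comap_subtype_self]

theorem isTorsionPair_leftOrthogonal [IsArtinianRing A] {F : Set (ModuleCat.{u} A)}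
    (hmod : IsModSubcat A F) (hsub : SubmoduleClosed A F) (hext : ExtClosed A F) :
    IsTorsionPair (leftOrthogonal F) F := by
  refine ⟨isModSubcat_leftOrthogonal F, fun X hX => hX.2, fun X _ => ?_⟩
  obtain ⟨P, hP⟩ := exists_minimal_of_wellFoundedLT
    (fun P : Submodule A X => ModuleCat.of A (X ⧸ P) ∈ F) ⟨⊤, hmod.2.1 _ inferInstance⟩
  exact ⟨P, mem_leftOrthogonal_of_minimal hmod hsub hext hP, hP.prop⟩

end LeftOrthogonal

section FiniteLength

variable (A) in
def finiteLength : Set (ModuleCat.{u} A) :=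
  {M | IsFiniteLength A M}

theorem isModSubcat_finiteLength : IsModSubcat A (finiteLength A) := by
  refine ⟨fun M N e hM => e.isFiniteLength hM, fun M _ => .of_subsingleton, fun M hM => ?_⟩
  have := (isFiniteLength_iff_isNoetherian_isArtinian.mp hM).1
  infer_instance

theorem submoduleClosed_finiteLength : SubmoduleClosed A (finiteLength A) :=
  fun _ hM N => IsFiniteLength.of_injective (f := N.subtype) hM N.injective_subtype

theorem extClosed_finiteLength : ExtClosed A (finiteLength A) := by
  intro L M N _ f g _ _ hfg hL hN
  obtain ⟨_, _⟩ := isFiniteLength_iff_isNoetherian_isArtinian.mp hL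
  obtain ⟨_, _⟩ := isFiniteLength_iff_isNoetherian_isArtinian.mp hN
  exact isFiniteLength_iff_isNoetherian_isArtinian.mpr
    ⟨isNoetherian_of_range_eq_ker f g hfg, isArtinian_of_range_eq_ker f g hfg⟩

theorem subsingleton_of_forall_isFiniteLength_mkQ_eq_zero {M : Type u} [AddCommGroup M]
    [Module A M] [Module.Finite A M]
    (h : ∀ N : Submodule A M, IsFiniteLength A (M ⧸ N) → N.mkQ = 0) : Subsingleton M := by
  rw [← not_nontrivial_iff_subsingleton]
  intro hM
  obtain ⟨N, hN⟩ := IsCoatomic.exists_coatom (Submodule A M)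
  have : IsSimpleModule A (M ⧸ N) := isSimpleModule_iff_isCoatom.mpr hN
  have hN0 := h N (isFiniteLength_iff_isNoetherian_isArtinian.mpr ⟨inferInstance, inferInstance⟩)
  apply hN.1
  rw [← Submodule.ker_mkQ N, hN0, LinearMap.ker_zero]

theorem isArtinianRing_of_isTorsionPair_finiteLength {T : Set (ModuleCat.{u} A)}
    (hT : IsTorsionPair T (finiteLength A)) : IsArtinianRing A := by
  obtain ⟨N, hNT, hNF⟩ := hT.2.2 (ModuleCat.of A A) (Module.Finite.self A)
  have : Module.Finite A N := hT.1.2.2 _ hNT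
  have hN : N = ⊥ := Submodule.subsingleton_iff_eq_bot.mp <|
    subsingleton_of_forall_isFiniteLength_mkQ_eq_zero fun N' hN' =>
      hT.2.1 _ hNT (ModuleCat.of A (N ⧸ N')) hN' N'.mkQ
  rw [isArtinianRing_iff_isFiniteLength]
  exact hNF.of_injective (f := N.mkQ) (by rw [← LinearMap.ker_eq_bot, Submodule.ker_mkQ, hN])

end FiniteLength

theorem artinian_iff_every_torsionFree_class_is_strong_general
    (Λ : Type u) [Ring Λ] :
    IsArtinianRing Λᵐᵒᵖ ↔
      ∀ F : Set (ModuleCat.{u} Λᵐᵒᵖ), IsModSubcat Λᵐᵒᵖ F →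
        SubmoduleClosed Λᵐᵒᵖ F → ExtClosed Λᵐᵒᵖ F →
        ∃ T : Set (ModuleCat.{u} Λᵐᵒᵖ), IsModSubcat Λᵐᵒᵖ T ∧
          (∀ X ∈ T, ∀ Y ∈ F, ∀ f : X →ₗ[Λᵐᵒᵖ] Y, f = 0) ∧
          (∀ X : ModuleCat.{u} Λᵐᵒᵖ, Module.Finite Λᵐᵒᵖ X →
            ∃ N : Submodule Λᵐᵒᵖ X,
              ModuleCat.of Λᵐᵒᵖ N ∈ T ∧ ModuleCat.of Λᵐᵒᵖ (X ⧸ N) ∈ F) := by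
  refine ⟨fun _ F hmod hsub hext => ⟨_, isTorsionPair_leftOrthogonal hmod hsub hext⟩, fun h => ?_⟩
  obtain ⟨T, hT⟩ := h (finiteLength Λᵐᵒᵖ) isModSubcat_finiteLength submoduleClosed_finiteLength
    extClosed_finiteLength
  exact isArtinianRing_of_isTorsionPair_finiteLength hT

theorem artinian_iff_every_torsionFree_class_is_strong
    (Λ : Type u) [Ring Λ] [IsNoetherianRing Λᵐᵒᵖ] :
    IsArtinianRing Λᵐᵒᵖ ↔
      ∀ F : Set (ModuleCat.{u} Λᵐᵒᵖ), IsModSubcat Λᵐᵒᵖ F →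
        SubmoduleClosed Λᵐᵒᵖ F → ExtClosed Λᵐᵒᵖ F →
        ∃ T : Set (ModuleCat.{u} Λᵐᵒᵖ), IsModSubcat Λᵐᵒᵖ T ∧
          (∀ X ∈ T, ∀ Y ∈ F, ∀ f : X →ₗ[Λᵐᵒᵖ] Y, f = 0) ∧
          (∀ X : ModuleCat.{u} Λᵐᵒᵖ, Module.Finite Λᵐᵒᵖ X →
            ∃ N : Submodule Λᵐᵒᵖ X,
              ModuleCat.of Λᵐᵒᵖ N ∈ T ∧ ModuleCat.of Λᵐᵒᵖ (X ⧸ N) ∈ F) :=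
  artinian_iff_every_torsionFree_class_is_strong_general Λ
end

section
/- Let R be a commutative noetherian ring. The assignment 𝒞 ↦ Ass 𝒞 := ⋃_{X ∈ 𝒞} Ass_R(X), sending a torsion-free class of the category of finitely generated R-modules to the union of the associated primes of its members, is a bijection from the set of torsion-free classes of mod R onto the set of all subsets of Spec R. -/
universe u

/-!
A torsion-free class `𝒞` contains `R ⧸ p` for every `p ∈ Ass 𝒞`, as the cyclic submodule of a
member generated by an element with annihilator `p`. Conversely, `𝒞` then contains every finitely
generated `M` with `Ass M ⊆ Ass 𝒞`: a minimal primary decomposition `0 = Q₁ ∩ ⋯ ∩ Qₙ` embeds `M`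
into `⊕ M ⧸ Qᵢ`, where `M ⧸ Qᵢ` is `pᵢ`-coprimary with `pᵢ ∈ Ass M`; a `p`-coprimary module is
filtered by its `pᵏ`-torsion submodules, and each layer is a finitely generated torsion-free
`R ⧸ p`-module, hence a submodule of some `(R ⧸ p)ⁿ`. So `𝒞` is determined by `Ass 𝒞`, and every
`S ⊆ Spec R` is attained by the torsion-free class `{M | Ass M ⊆ S}`, since `Ass (R ⧸ p) = {p}`.
-/

theorem Module.exists_injective_fin_pi_of_isTorsionFree (D W : Type*) [CommRing D] [IsDomain D]
    [AddCommGroup W] [Module D W] [Module.Finite D W] [Module.IsTorsionFree D W] :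
    ∃ (k : ℕ) (f : W →ₗ[D] (Fin k → D)), Function.Injective f := by
  -- `W ⧸ F` is torsion for the free span `F` of a maximal independent subfamily of generators,
  -- so multiplication by a nonzero common annihilator of `W ⧸ F` embeds `W` into `F`.
  obtain ⟨n, v, hv⟩ := Module.Finite.exists_fin (R := D) (M := W)
  obtain ⟨I, hI, hmax⟩ := exists_maximal_linearIndepOn D v
  rw [Set.image_eq_range] at hmax
  set F := Submodule.span D (Set.range fun i : I => v i)
  have hspan : Submodule.span D (Set.range (F.mkQ ∘ v)) = ⊤ := by
    rw [Set.range_comp, ← Submodule.map_span, hv, Submodule.map_top, Submodule.range_mkQ]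
  have htors : Submodule.torsion D (W ⧸ F) = ⊤ := by
    rw [eq_top_iff, ← hspan, Submodule.span_le]
    rintro _ ⟨i, rfl⟩
    by_cases hi : i ∈ I
    · rw [SetLike.mem_coe, Function.comp_apply, Submodule.mkQ_apply,
        (Submodule.Quotient.mk_eq_zero F).mpr (Submodule.subset_span ⟨⟨i, hi⟩, rfl⟩)]
      exact zero_mem _
    · obtain ⟨a, ha, haF⟩ := hmax i hi
      exact ⟨⟨a, mem_nonZeroDivisors_of_ne_zero ha⟩, (Submodule.Quotient.mk_eq_zero F).mpr haF⟩
  have hWF : Module.IsTorsion D (W ⧸ F) := fun x =>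
    (Submodule.mem_torsion_iff x).mp (htors ▸ Submodule.mem_top)
  obtain ⟨d, hdann, hd⟩ := Submodule.annihilator_top_inter_nonZeroDivisors hWF
  have hdF : ∀ x : W, d • x ∈ F := fun x => by
    rw [← Submodule.Quotient.mk_eq_zero, Submodule.Quotient.mk_smul]
    exact Submodule.mem_annihilator.mp hdann _ trivial
  have : Module.Free D F := Module.Free.of_basis (Module.Basis.span hI)
  have : Module.Finite D F := Module.Finite.span_of_finite D (Set.finite_range _)
  let g : W →ₗ[D] F := (LinearMap.lsmul D W d).codRestrict F hdF
  have hg : Function.Injective g := fun x y hxy =>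
    smul_right_injective W (nonZeroDivisors.ne_zero hd) (congrArg Subtype.val hxy)
  let e := (Module.finBasis D F).equivFun
  exact ⟨_, e.toLinearMap ∘ₗ g, e.injective.comp hg⟩

variable (R : Type u) [CommRing R] in
def IsTorsionFreeClass (C : Set (ModuleCat.{u} R)) : Prop :=
  IsModSubcat R C ∧ SubmoduleClosed R C ∧ ExtClosed R C

namespace IsTorsionFreeClass

variable {R : Type u} [CommRing R] {C : Set (ModuleCat.{u} R)} (hC : IsTorsionFreeClass R C)
  {M N L : Type u} [AddCommGroup M] [Module R M] [AddCommGroup N] [Module R N]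
  [AddCommGroup L] [Module R L]
include hC

theorem mem_of_equiv (e : M ≃ₗ[R] N) (hM : ModuleCat.of R M ∈ C) : ModuleCat.of R N ∈ C :=
  hC.1.1 _ _ e hM

theorem mem_of_subsingleton [Subsingleton M] : ModuleCat.of R M ∈ C :=
  hC.1.2.1 _ ‹_›

theorem finite_of_mem (hM : ModuleCat.of R M ∈ C) : Module.Finite R M :=
  hC.1.2.2 _ hM

theorem mem_of_injective {f : M →ₗ[R] N} (hf : Function.Injective f) (hN : ModuleCat.of R N ∈ C) :
    ModuleCat.of R M ∈ C :=
  hC.mem_of_equiv (LinearEquiv.ofInjective f hf).symm (hC.2.1 _ hN _)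

theorem mem_of_exact {f : L →ₗ[R] M} {g : M →ₗ[R] N} (hf : Function.Injective f)
    (hfg : Function.Exact f g) (hg : Function.Surjective g) (hL : ModuleCat.of R L ∈ C)
    (hN : ModuleCat.of R N ∈ C) : ModuleCat.of R M ∈ C :=
  have := hC.finite_of_mem hL
  have := hC.finite_of_mem hN
  hC.2.2 (.of R L) (.of R M) (.of R N) (.of_exact hfg hg) f g hf hg
    (LinearMap.exact_iff.mp hfg).symm hL hN

theorem prod_mem (hM : ModuleCat.of R M ∈ C) (hN : ModuleCat.of R N ∈ C) :
    ModuleCat.of R (M × N) ∈ C :=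
  hC.mem_of_exact LinearMap.inl_injective .inl_snd LinearMap.snd_surjective hM hN

theorem pi_mem (hM : ModuleCat.of R M ∈ C) (k : ℕ) : ModuleCat.of R (Fin k → M) ∈ C := by
  induction k with
  | zero => exact hC.mem_of_subsingleton
  | succ k ih => exact hC.mem_of_equiv (Fin.consLinearEquiv R fun _ => M) (hC.prod_mem hM ih)

theorem quotient_inf_mem {N₁ N₂ : Submodule R M} (h₁ : ModuleCat.of R (M ⧸ N₁) ∈ C)
    (h₂ : ModuleCat.of R (M ⧸ N₂) ∈ C) : ModuleCat.of R (M ⧸ (N₁ ⊓ N₂)) ∈ C := by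
  have hker : LinearMap.ker (N₁.mkQ.prod N₂.mkQ) = N₁ ⊓ N₂ := by
    rw [LinearMap.ker_prod, Submodule.ker_mkQ, Submodule.ker_mkQ]
  exact hC.mem_of_injective
    (LinearMap.ker_eq_bot.mp (Submodule.ker_liftQ_eq_bot' _ _ hker.symm)) (hC.prod_mem h₁ h₂)

theorem quotient_finsetInf_mem (s : Finset (Submodule R M))
    (hs : ∀ N ∈ s, ModuleCat.of R (M ⧸ N) ∈ C) : ModuleCat.of R (M ⧸ s.inf id) ∈ C :=
  Finset.inf_induction (p := fun N : Submodule R M => ModuleCat.of R (M ⧸ N) ∈ C)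
    hC.mem_of_subsingleton (fun _ h₁ _ h₂ => hC.quotient_inf_mem h₁ h₂) hs

theorem mem_of_isTorsionBySet {p : Ideal R} [p.IsPrime] (hp : ModuleCat.of R (R ⧸ p) ∈ C)
    [Module.Finite R M] (htors : Module.IsTorsionBySet R M p)
    (hreg : ∀ s ∉ p, IsSMulRegular M s) : ModuleCat.of R M ∈ C := by
  let := htors.module
  have : IsScalarTower R (R ⧸ p) M := htors.isScalarTower
  have : Module.Finite (R ⧸ p) M := .of_restrictScalars_finite R _ M
  have : Module.IsTorsionFree (R ⧸ p) M := .of_smul_eq_zero fun d x hdx => by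
    obtain ⟨s, rfl⟩ := Ideal.Quotient.mk_surjective d
    rw [htors.mk_smul] at hdx
    exact (em (s ∈ p)).imp Ideal.Quotient.eq_zero_iff_mem.mpr fun hs =>
      (hreg s hs).right_eq_zero_of_smul hdx
  obtain ⟨k, f, hf⟩ := Module.exists_injective_fin_pi_of_isTorsionFree (R ⧸ p) M
  exact hC.mem_of_injective (f := f.restrictScalars R) hf (hC.pi_mem hp k)

theorem mem_of_pow_le_annihilator [IsNoetherianRing R] {p : Ideal R} [p.IsPrime]
    (hp : ModuleCat.of R (R ⧸ p) ∈ C) (n : ℕ) [Module.Finite R M]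
    (hn : p ^ n ≤ Module.annihilator R M) (hreg : ∀ s ∉ p, IsSMulRegular M s) :
    ModuleCat.of R M ∈ C := by
  induction n generalizing M with
  | zero =>
    rw [pow_zero, Ideal.one_eq_top, top_le_iff, Module.annihilator_eq_top_iff] at hn
    exact hC.mem_of_subsingleton
  | succ n ih =>
    let T := Submodule.torsionBySet R M p
    have hT : ModuleCat.of R T ∈ C :=
      hC.mem_of_isTorsionBySet hp (Submodule.torsionBySet_isTorsionBySet _)
        fun s hs => .of_right_eq_zero_of_smul fun x hx =>
          Subtype.ext ((hreg s hs).right_eq_zero_of_smul (congrArg Subtype.val hx))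
    have hQ : ModuleCat.of R (M ⧸ T) ∈ C := by
      refine ih ?_ ?_
      · intro r hr
        rw [Module.mem_annihilator]
        intro x
        induction x using Submodule.Quotient.induction_on with | _ x => ?_
        rw [← Submodule.Quotient.mk_smul, Submodule.Quotient.mk_eq_zero,
          Submodule.mem_torsionBySet_iff]
        rintro ⟨a, ha⟩
        rw [smul_smul]
        exact Module.mem_annihilator.mp (hn (pow_succ' p n ▸ Ideal.mul_mem_mul ha hr)) x
      · refine fun s hs => .of_right_eq_zero_of_smul fun x hsx => ?_
        induction x using Submodule.Quotient.induction_on with | _ x => ?_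
        rw [← Submodule.Quotient.mk_smul, Submodule.Quotient.mk_eq_zero,
          Submodule.mem_torsionBySet_iff] at hsx
        rw [Submodule.Quotient.mk_eq_zero, Submodule.mem_torsionBySet_iff]
        rintro ⟨a, ha⟩
        exact (hreg s hs).right_eq_zero_of_smul (by rw [smul_comm]; exact hsx ⟨a, ha⟩)
    exact hC.mem_of_exact T.injective_subtype (LinearMap.exact_subtype_mkQ T) T.mkQ_surjective hT hQ

theorem quotient_mem_of_isPrimary [IsNoetherianRing R] [Module.Finite R M] {Q : Submodule R M}
    (hQ : Q.IsPrimary) (hp : ModuleCat.of R (R ⧸ (Q.colon Set.univ).radical) ∈ C) :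
    ModuleCat.of R (M ⧸ Q) ∈ C := by
  have := hQ.isPrime_radical_colon
  obtain ⟨n, hn⟩ := Ideal.exists_radical_pow_le_of_fg (Q.colon Set.univ) (IsNoetherian.noetherian _)
  refine hC.mem_of_pow_le_annihilator hp n (hn.trans Submodule.annihilator_quotient.ge) ?_
  refine fun s hs => .of_right_eq_zero_of_smul fun x hsx => ?_
  obtain ⟨x, rfl⟩ := Q.mkQ_surjective x
  rw [Submodule.mkQ_apply, ← Submodule.Quotient.mk_smul, Submodule.Quotient.mk_eq_zero] at hsx
  rw [Submodule.mkQ_apply, Submodule.Quotient.mk_eq_zero]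
  exact (hQ.mem_or_mem hsx).resolve_right hs

theorem mem_of_forall_associatedPrimes [IsNoetherianRing R] [Module.Finite R M]
    (h : ∀ p ∈ associatedPrimes R M, ModuleCat.of R (R ⧸ p) ∈ C) : ModuleCat.of R M ∈ C := by
  obtain ⟨t, ht⟩ :=
    Submodule.IsLasker.exists_isMinimalPrimaryDecomposition (Submodule.isLasker R M) ⊥
  have hbot := hC.quotient_finsetInf_mem t fun Q hQ =>
    hC.quotient_mem_of_isPrimary (ht.primary hQ) (h _ (ht.mem_associatedPrimes hQ))
  rw [ht.inf_eq] at hbot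
  exact hC.mem_of_equiv (Submodule.quotEquivOfEqBot ⊥ rfl) hbot

end IsTorsionFreeClass

section Classification

variable {R : Type u} [CommRing R]

def associatedPrimesOfClass (C : Set (ModuleCat.{u} R)) : Set (PrimeSpectrum R) :=
  {p | ∃ M ∈ C, IsAssociatedPrime p.asIdeal M}

def classOfAssociatedPrimesIn (S : Set (PrimeSpectrum R)) : Set (ModuleCat.{u} R) :=
  {M | Module.Finite R M ∧ ∀ p : PrimeSpectrum R, IsAssociatedPrime p.asIdeal M → p ∈ S}

variable [IsNoetherianRing R]

theorem IsTorsionFreeClass.quotient_mem_of_isAssociatedPrime {C : Set (ModuleCat.{u} R)}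
    (hC : IsTorsionFreeClass R C) {X : ModuleCat.{u} R} (hX : X ∈ C) {p : Ideal R}
    (hp : IsAssociatedPrime p X) : ModuleCat.of R (R ⧸ p) ∈ C :=
  have ⟨_, _, hf⟩ := (isAssociatedPrime_iff_exists_injective_linearMap p X).mp hp
  hC.mem_of_injective hf hX

theorem IsTorsionFreeClass.subset_of_associatedPrimesOfClass_subset
    {C₁ C₂ : Set (ModuleCat.{u} R)} (hC₁ : IsTorsionFreeClass R C₁) (hC₂ : IsTorsionFreeClass R C₂)
    (h : associatedPrimesOfClass C₁ ⊆ associatedPrimesOfClass C₂) : C₁ ⊆ C₂ := fun M hM =>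
  have := hC₁.finite_of_mem hM
  hC₂.mem_of_forall_associatedPrimes fun p hp =>
    have ⟨_, hX, hpX⟩ := @h ⟨p, hp.isPrime⟩ ⟨M, hM, hp⟩
    hC₂.quotient_mem_of_isAssociatedPrime hX hpX

theorem isTorsionFreeClass_classOfAssociatedPrimesIn (S : Set (PrimeSpectrum R)) :
    IsTorsionFreeClass R (classOfAssociatedPrimesIn S) := by
  refine ⟨⟨fun M N e hM => ?_, fun M _ => ?_, fun M hM => hM.1⟩, fun M hM N => ?_,
    fun L M N hM f g hf hg hfg hL hN => ⟨hM, fun p hp => ?_⟩⟩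
  · have := hM.1
    exact ⟨.equiv e, fun p hp => hM.2 p ((LinearEquiv.isAssociatedPrime_iff e).mpr hp)⟩
  · exact ⟨inferInstance, fun p hp => (not_isAssociatedPrime_of_subsingleton hp).elim⟩
  · have := hM.1
    exact ⟨inferInstance, fun p hp => hM.2 p (hp.map_of_injective N.subtype N.injective_subtype)⟩
  · exact (associatedPrimes.subset_union_of_exact hf (LinearMap.exact_iff.mpr hfg.symm) hp).elim
      (hL.2 p) (hN.2 p)

theorem associatedPrimesOfClass_classOfAssociatedPrimesIn (S : Set (PrimeSpectrum R)) :
    associatedPrimesOfClass (classOfAssociatedPrimesIn.{u} S) = S := by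
  ext p
  refine ⟨fun ⟨M, hM, hp⟩ => hM.2 p hp, fun hp => ⟨.of R (R ⧸ p.asIdeal), ⟨inferInstance, ?_⟩, ?_⟩⟩
  · intro q hq
    rwa [PrimeSpectrum.ext (hq.eq_radical p.isPrime.isPrimary |>.trans p.isPrime.radical)]
  · exact (isAssociatedPrime_iff_exists_injective_linearMap _ _).mpr
      ⟨p.isPrime, LinearMap.id, Function.injective_id⟩

end Classification

theorem ass_bijection_torsionFree_classes
    (R : Type u) [CommRing R] [IsNoetherianRing R] :
    Function.Bijective
      (fun C : {C : Set (ModuleCat.{u} R) //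
          IsModSubcat R C ∧ SubmoduleClosed R C ∧ ExtClosed R C} =>
        ({p : PrimeSpectrum R | ∃ M ∈ C.1, IsAssociatedPrime p.asIdeal M} :
          Set (PrimeSpectrum R))) := by
  refine ⟨fun C₁ C₂ h => Subtype.ext (subset_antisymm ?_ ?_), fun S =>
    ⟨⟨_, isTorsionFreeClass_classOfAssociatedPrimesIn S⟩,
      associatedPrimesOfClass_classOfAssociatedPrimesIn S⟩⟩
  · exact IsTorsionFreeClass.subset_of_associatedPrimesOfClass_subset C₁.2 C₂.2 h.le
  · exact IsTorsionFreeClass.subset_of_associatedPrimesOfClass_subset C₂.2 C₁.2 h.ge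
end
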